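/- Let X be a compact Hausdorff totally disconnected topological space and let A be the unital commutative ℂ-algebra of locally constant functions X → ℂ under pointwise operations. Then every maximal ideal of A is of the form 𝔪ₓ = { f ∈ A : f(x) = 0 } for some x ∈ X; moreover, for each x ∈ X the localization map A → A_{𝔪ₓ} is surjective with kernel 𝔪ₓ, so that A_{𝔪ₓ} ≅ A/𝔪ₓ ≅ ℂ. -/

import Mathlib

set_option linter.unusedSectionVars false

/-- The ideal of locally constant functions vanishing at a point `x`. -/
noncomputable def mIdeal (X : Type) [TopologicalSpace X] (x : X) :
    Ideal (LocallyConstant X ℂ) where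
  carrier := {f : LocallyConstant X ℂ | f x = 0}
  zero_mem' := by simp
  add_mem' := by
    intro f g hf hg
    simp only [Set.mem_setOf_eq, LocallyConstant.add_apply] at *
    rw [hf, hg, add_zero]
  smul_mem' := by
    intro c f hf
    simp only [Set.mem_setOf_eq, smul_eq_mul, LocallyConstant.mul_apply] at *
    rw [hf, mul_zero]

/-- The multiplicative submonoid of locally constant functions not vanishing at `x`
(the complement of the prime ideal `mIdeal X x`). -/
noncomputable def nonvanishing (X : Type) [TopologicalSpace X] (x : X) :
    Submonoid (LocallyConstant X ℂ) where
  carrier := {f : LocallyConstant X ℂ | f x ≠ 0}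
  one_mem' := by simp
  mul_mem' := by
    intro f g hf hg
    simp only [Set.mem_setOf_eq, LocallyConstant.mul_apply] at *
    exact mul_ne_zero hf hg

lemma mem_mIdeal_iff {X : Type} [TopologicalSpace X] {x : X} {f : LocallyConstant X ℂ} :
    f ∈ mIdeal X x ↔ f x = 0 := Iff.rfl

lemma mem_nonvanishing_iff {X : Type} [TopologicalSpace X] {x : X} {f : LocallyConstant X ℂ} :
    f ∈ nonvanishing X x ↔ f x ≠ 0 := Iff.rfl

lemma lc_isUnit {X : Type} [TopologicalSpace X] (g : LocallyConstant X ℂ)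
    (hg : ∀ y, g y ≠ 0) : IsUnit g := by
  refine isUnit_iff_exists_inv.mpr ⟨g.map (·⁻¹), ?_⟩
  ext y
  simp only [LocallyConstant.mul_apply, LocallyConstant.map_apply, Function.comp_apply,
    LocallyConstant.coe_one, Pi.one_apply]
  exact mul_inv_cancel₀ (hg y)

/-- For `X` compact Hausdorff and totally disconnected and `A` the ring of locally constant
functions `X → ℂ`: every maximal ideal of `A` is the ideal `𝔪ₓ` of functions vanishing at
some point `x`, and for each `x` the localization map `A → A_{𝔪ₓ}` is surjective with kernel
`𝔪ₓ` (so that `A_{𝔪ₓ} ≅ A/𝔪ₓ ≅ ℂ`). -/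
theorem maximal_ideals_and_localizations_of_locallyConstant
    (X : Type) [TopologicalSpace X] [CompactSpace X] [T2Space X]
    [TotallyDisconnectedSpace X] :
    (∀ I : Ideal (LocallyConstant X ℂ), I.IsMaximal → ∃ x : X, I = mIdeal X x) ∧
    ∀ x : X,
      Function.Surjective
        (algebraMap (LocallyConstant X ℂ) (Localization (nonvanishing X x))) ∧
      RingHom.ker (algebraMap (LocallyConstant X ℂ) (Localization (nonvanishing X x)))
        = mIdeal X x ∧
      Nonempty (Localization (nonvanishing X x) ≃+* ℂ) := by
  constructor
  · intro I hI
    by_cases h : ∃ x, I ≤ mIdeal X x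
    · obtain ⟨x, hx⟩ := h
      refine ⟨x, hI.eq_of_le ?_ hx⟩
      rw [Ideal.ne_top_iff_one]
      intro h1
      simp only [mem_mIdeal_iff, LocallyConstant.coe_one, Pi.one_apply] at h1
      exact one_ne_zero h1
    · exfalso
      push_neg at h
      have hcov : ∀ y : X, ∃ f : LocallyConstant X ℂ, f ∈ I ∧ f y ≠ 0 := by
        intro y
        obtain ⟨f, hfI, hfn⟩ := SetLike.not_le_iff_exists.mp (h y)
        exact ⟨f, hfI, hfn⟩
      set U : I → Set X := fun f => ((f : LocallyConstant X ℂ)) ⁻¹' {0}ᶜ with hU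
      have hopen : ∀ i : I, IsOpen (U i) :=
        fun i => (isClosed_singleton.isOpen_compl).preimage
          (i : LocallyConstant X ℂ).continuous
      have hcover : (Set.univ : Set X) ⊆ ⋃ i, U i := by
        intro y _
        obtain ⟨f, hfI, hfn⟩ := hcov y
        exact Set.mem_iUnion.mpr ⟨⟨f, hfI⟩, hfn⟩
      obtain ⟨t, ht⟩ := isCompact_univ.elim_finite_subcover U hopen hcover
      set g : LocallyConstant X ℂ :=
        ∑ i ∈ t, (i : LocallyConstant X ℂ) * (i : LocallyConstant X ℂ).map (starRingEnd ℂ)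
        with hg
      have hgI : g ∈ I := by
        refine Ideal.sum_mem I fun i _ => I.mul_mem_right _ i.2
      have hgne : ∀ y, g y ≠ 0 := by
        intro y
        obtain ⟨i, hit, hiy⟩ : ∃ i ∈ t, (i : LocallyConstant X ℂ) y ≠ 0 := by
          have := ht (Set.mem_univ y)
          simpa [U] using this
        have hval : g y = ∑ i ∈ t,
            ((i : LocallyConstant X ℂ) y * (starRingEnd ℂ) ((i : LocallyConstant X ℂ) y)) := by
          have h1 : g y = ∑ i ∈ t,
              ((i : LocallyConstant X ℂ) * (i : LocallyConstant X ℂ).map (starRingEnd ℂ)) y :=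
            map_sum (LocallyConstant.evalRingHom y)
              (fun i : I =>
                (i : LocallyConstant X ℂ) * (i : LocallyConstant X ℂ).map (starRingEnd ℂ)) t
          rw [h1]
          exact Finset.sum_congr rfl fun i _ => by
            simp [LocallyConstant.mul_apply, LocallyConstant.map_apply]
        rw [hval]
        have : ∑ i ∈ t,
            ((i : LocallyConstant X ℂ) y * (starRingEnd ℂ) ((i : LocallyConstant X ℂ) y))
            = ((∑ i ∈ t, Complex.normSq ((i : LocallyConstant X ℂ) y) : ℝ) : ℂ) := by
          push_cast
          exact Finset.sum_congr rfl fun i _ => (Complex.mul_conj _)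
        rw [this]
        rw [Complex.ofReal_ne_zero]
        have hpos : 0 < ∑ i ∈ t, Complex.normSq ((i : LocallyConstant X ℂ) y) := by
          refine Finset.sum_pos' (fun i _ => Complex.normSq_nonneg _) ?_
          exact ⟨i, hit, Complex.normSq_pos.mpr hiy⟩
        exact ne_of_gt hpos
      exact hI.ne_top (I.eq_top_of_isUnit_mem hgI (lc_isUnit g hgne))
  · intro x
    set S := nonvanishing X x with hS
    -- idempotent support function of s
    have key : ∀ s : LocallyConstant X ℂ,
        s * s.map (·⁻¹) = s.map (fun z => if z = 0 then 0 else 1) := by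
      intro s
      ext y
      simp only [LocallyConstant.mul_apply, LocallyConstant.map_apply, Function.comp_apply]
      by_cases hy : s y = 0
      · simp [hy]
      · simp [hy, mul_inv_cancel₀ hy]
    have hkerS : RingHom.ker (algebraMap (LocallyConstant X ℂ) (Localization S))
        = mIdeal X x := by
      ext f
      rw [RingHom.mem_ker, IsLocalization.map_eq_zero_iff S, mem_mIdeal_iff]
      constructor
      · rintro ⟨m, hm⟩
        have := DFunLike.congr_fun hm x
        simp only [LocallyConstant.mul_apply, LocallyConstant.coe_zero, Pi.zero_apply] at this
        exact (mul_eq_zero.mp this).resolve_left (mem_nonvanishing_iff.mp m.2)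
      · intro hf
        refine ⟨⟨f.map (fun z => if z = 0 then 1 else 0), ?_⟩, ?_⟩
        · rw [mem_nonvanishing_iff]
          simp [LocallyConstant.map_apply, hf]
        · ext y
          simp only [LocallyConstant.mul_apply, LocallyConstant.map_apply, Function.comp_apply,
            LocallyConstant.coe_zero, Pi.zero_apply]
          by_cases hy : f y = 0 <;> simp [hy]
    have hsurj : Function.Surjective
        (algebraMap (LocallyConstant X ℂ) (Localization S)) := by
      intro z
      obtain ⟨⟨f, s⟩, rfl⟩ := IsLocalization.mk'_surjective S z
      refine ⟨f * (s : LocallyConstant X ℂ).map (·⁻¹), ?_⟩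
      rw [eq_comm, IsLocalization.mk'_eq_iff_eq_mul, ← map_mul,
        IsLocalization.eq_iff_exists S]
      refine ⟨⟨(s : LocallyConstant X ℂ).map (fun z => if z = 0 then 0 else 1), ?_⟩, ?_⟩
      · rw [mem_nonvanishing_iff]
        simp [LocallyConstant.map_apply, mem_nonvanishing_iff.mp s.2]
      · ext y
        simp only [LocallyConstant.mul_apply, LocallyConstant.map_apply, Function.comp_apply]
        by_cases hy : (s : LocallyConstant X ℂ) y = 0
        · simp [hy]
        · simp [hy]
    refine ⟨hsurj, hkerS, ?_⟩
    -- evaluation ring hom and its kernel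
    have hkerEv : RingHom.ker (LocallyConstant.evalRingHom (Y := ℂ) x) = mIdeal X x := by
      ext f
      rw [RingHom.mem_ker, mem_mIdeal_iff]
      rfl
    have hevSurj : Function.Surjective (LocallyConstant.evalRingHom (Y := ℂ) x) :=
      fun c => ⟨LocallyConstant.const X c, rfl⟩
    exact ⟨((RingHom.quotientKerEquivOfSurjective hsurj).symm.trans
      ((Ideal.quotEquivOfEq (hkerS.trans hkerEv.symm)).trans
        (RingHom.quotientKerEquivOfSurjective hevSurj)))⟩
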